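/- In the Braess network with quadratic cost c(x) = x − x²/2 and no incentives, the flow (f_{p1}, f_{p2}, f_{p3}) = (1/2, 0, 1/2) minimizes the social cost C°(f) = Σ_e c_e(f_e) f_e + Σ_{v∈{v,w}} c_v(f_v) f_v over all feasible flows, and the minimum value is 15/8. -/

import Mathlib

/-- Quadratic latency `c(x) = x - x²/2` on edges `e1` and `e4` of the Braess network. -/
noncomputable def c (x : ℝ) : ℝ := x - x^2/2

/-- The no-incentive social cost `C°(f)` of the Braess network:
`Σ_e c_e(f_e)·f_e + c_v(f_v)·f_v + c_w(f_w)·f_w` with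
`f_{e1} = f_v = f 0 + f 1`, `f_{e2} = f 2`, `f_{e3} = f 0`,
`f_{e4} = f_w = f 1 + f 2`, `f_{e5} = f 1`. -/
noncomputable def Co (f : Fin 3 → ℝ) : ℝ :=
  c (f 0 + f 1) * (f 0 + f 1) + 1 * f 2 + 1 * f 0 +
  c (f 1 + f 2) * (f 1 + f 2) + 0 * f 1 +
  (f 0 + f 1) * (f 0 + f 1) + (f 1 + f 2) * (f 1 + f 2)

/-! Since `f_{e3} = s - f_w` and `f_{e2} = s - f_v` for the total demand `s`, the cost splits
as `C° = 2 s + ψ(f_v) + ψ(f_w)` with `ψ(x) = (c(x) + x - 1)·x`. On `x ≤ 3` the cubic `ψ` lies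
above its tangent at `1/2`, whose slope `5/8` is positive; as `f_v + f_w = 1 + f_{p2} ≥ 1`,
this gives `C° ≥ 2 + 2 ψ(1/2) = 15/8`, attained when `f_v = f_w = 1/2`. -/

noncomputable def excessCost (x : ℝ) : ℝ := (c x + x - 1) * x

theorem Co_eq_two_mul_sum_add_excessCost (f : Fin 3 → ℝ) :
    Co f = 2 * ∑ i, f i + excessCost (f 0 + f 1) + excessCost (f 1 + f 2) := by
  simp only [Co, excessCost, Fin.sum_univ_three]
  ring

theorem excessCost_eq (x : ℝ) :
    excessCost x = -1/16 + 5/8 * (x - 1/2) + (3 - x) / 2 * (x - 1/2) ^ 2 := by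
  simp only [excessCost, c]
  ring

theorem tangent_le_excessCost {x : ℝ} (hx : x ≤ 3) :
    -1/16 + 5/8 * (x - 1/2) ≤ excessCost x := by
  rw [excessCost_eq]
  have : 0 ≤ (3 - x) / 2 * (x - 1/2) ^ 2 := by
    apply mul_nonneg <;> [linarith; positivity]
  linarith

theorem fifteen_eighths_le_Co {g : Fin 3 → ℝ} (hg : ∀ i, 0 ≤ g i) (hsum : ∑ i, g i = 1) :
    15/8 ≤ Co g := by
  have hs : g 0 + g 1 + g 2 = 1 := by rwa [Fin.sum_univ_three] at hsum
  have hv := tangent_le_excessCost (x := g 0 + g 1) (by linarith [hg 2])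
  have hw := tangent_le_excessCost (x := g 1 + g 2) (by linarith [hg 0])
  rw [Co_eq_two_mul_sum_add_excessCost, hsum]
  linarith [hg 1]

theorem Co_half_zero_half : Co ![1/2, 0, 1/2] = 15/8 := by
  norm_num [Co, c, Matrix.cons_val_two]

/-- In the quadratic Braess network with no incentives, the flow
`(1/2, 0, 1/2)` minimizes `C°` over all feasible flows, with minimum value `15/8`. -/
theorem braess_quadratic_social_optimum :
    (∀ g : Fin 3 → ℝ, (∀ i, 0 ≤ g i) → (∑ i, g i) = 1 →
      Co ![1/2, 0, 1/2] ≤ Co g) ∧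
    Co ![1/2, 0, 1/2] = 15/8 :=
  ⟨fun _ hg hsum => Co_half_zero_half ▸ fifteen_eighths_le_Co hg hsum, Co_half_zero_half⟩
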